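/- Suppose A₁, …, A_ℓ is a sequence of distinct strictly k-balanced k-uniform hypergraphs, all with the same k-density ρ, forming a self-avoiding cyclic walk (i.e., there exist distinct edges e₁, …, e_ℓ with e_i ∈ A_i ∩ A_{i+1} for all i, indices modulo ℓ), such that no proper subsequence forms a self-avoiding cyclic walk. Let S := A₁ + … + A_ℓ. Then there exists an edge e ∈ S with ρ_{S,e} > ρ. -/

import Mathlib

open Finset

/-- The vertex set (support) of a hypergraph given by its edge set. -/
def verts (A : Finset (Finset ℕ)) : Finset ℕ := A.sup id

/-- The edge set of the induced subhypergraph `A[U]`. -/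
def ind (A : Finset (Finset ℕ)) (U : Finset ℕ) : Finset (Finset ℕ) := A.filter (· ⊆ U)

/-- The density of the template `(A[U], I)`, where `A[U]` carries the vertex set `U`:
`(e(A[U]) - e(A[I])) / (|U| - |I|)`, and `0` if `U = I`. -/
def dens (A : Finset (Finset ℕ)) (U I : Finset ℕ) : ℚ :=
  if U = I then 0
  else (((ind A U).card : ℚ) - ((ind A I).card : ℚ)) / ((U.card : ℚ) - (I.card : ℚ))

/-- The density `ρ_{A,I}` of the template `(A, I)` (whose vertex set is `verts A ∪ I`). -/
def tdens (A : Finset (Finset ℕ)) (I : Finset ℕ) : ℚ := dens A (verts A ∪ I) I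

/-- The `k`-density `ρ_A = (e(A) - 1)/(v(A) - k)` of a `k`-uniform hypergraph. -/
def kdens (k : ℕ) (A : Finset (Finset ℕ)) : ℚ :=
  ((A.card : ℚ) - 1) / (((verts A).card : ℚ) - (k : ℚ))

/-- The template `(A, I)` is strictly balanced: every proper subtemplate `(B, I) ⊆ (A, I)`
(`B = A[U]` with vertex set `U`, `I ⊆ U`, `V(B) = U ≠ I`, `B ≠ A`) has strictly smaller
density. -/
def StrictBalT (A : Finset (Finset ℕ)) (I : Finset ℕ) : Prop :=
  ∀ U : Finset ℕ, I ⊆ U → U ⊂ verts A ∪ I → U ≠ I → dens A U I < tdens A I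

/-- `A 0, …, A (n-1)` is a self-avoiding cyclic walk: the hypergraphs are distinct and there
are distinct edges `e 0, …, e (n-1)` with `e i ∈ A i ∩ A ((i+1) % n)` for all `i < n`. -/
def IsSACW (n : ℕ) (A : ℕ → Finset (Finset ℕ)) : Prop :=
  2 ≤ n ∧ (∀ i < n, ∀ j < n, A i = A j → i = j) ∧
    ∃ e : ℕ → Finset ℕ,
      (∀ i < n, ∀ j < n, e i = e j → i = j) ∧
      ∀ i < n, e i ∈ A i ∧ e i ∈ A ((i + 1) % n)

/-- `A` is strictly `k`-balanced: it has at least three edges and every proper subgraph with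
at least two edges has strictly smaller `k`-density. -/
def StrictlyKBalanced (k : ℕ) (A : Finset (Finset ℕ)) : Prop :=
  3 ≤ A.card ∧ ∀ G ⊂ A, 2 ≤ G.card → kdens k G < kdens k A

/-!
Measure density against `ρ` by the excess `φ(G) = (e(G) - 1) - ρ (v(G) - k)`, which is zero on
every `A i` and negative on their proper subgraphs with at least two edges. Gluing `B` onto `T`
changes the excess by `φ(B)` minus the overlap term `(|B ∩ T| - 1) - ρ (|V(B) ∩ V(T)| - k)`, and
strict balance of `B` makes this term nonpositive, and negative once `B` meets `T` in two edges
without lying inside it. Adding `A 0, …, A (n-2)` one by one (consecutive ones share an edge)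
keeps the excess nonnegative. The last graph `A (n-1)` meets their union in the two walk edges
`e (n-2)` and `e (n-1)`, and is not contained in it: for `n = 2` it would be a proper subgraph of
`A 0` of the same density, and for `n ≥ 3` a third edge of `A (n-1)`, lying in some earlier `A a`,
closes a shorter self-avoiding cyclic walk through `A a, …, A (n-1)` (or through `A 0, A (n-1)`).
Hence `φ(S) > 0`, i.e. `ρ_S > ρ`.
-/

lemma subset_verts {A : Finset (Finset ℕ)} {e : Finset ℕ} (he : e ∈ A) : e ⊆ verts A :=
  le_sup (f := id) he

lemma verts_mono {A B : Finset (Finset ℕ)} (h : A ⊆ B) : verts A ⊆ verts B :=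
  sup_mono h

lemma verts_union (A B : Finset (Finset ℕ)) : verts (A ∪ B) = verts A ∪ verts B :=
  sup_union

lemma verts_ind_subset (A : Finset (Finset ℕ)) (U : Finset ℕ) : verts (ind A U) ⊆ U :=
  Finset.sup_le fun _ he => (mem_filter.mp he).2

lemma inter_subset_ind_inter_verts (A T : Finset (Finset ℕ)) :
    A ∩ T ⊆ ind A (verts A ∩ verts T) := fun _ he =>
  mem_filter.mpr ⟨(mem_inter.mp he).1,
    subset_inter (subset_verts (mem_inter.mp he).1) (subset_verts (mem_inter.mp he).2)⟩

lemma lt_card_verts {k : ℕ} {A : Finset (Finset ℕ)} (hu : ∀ e ∈ A, e.card = k)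
    (h2 : 2 ≤ A.card) : k < (verts A).card := by
  obtain ⟨a, ha, b, hb, hab⟩ := one_lt_card.mp h2
  have hba : ¬ b ⊆ a := fun h => hab (eq_of_subset_of_card_le h (by rw [hu a ha, hu b hb])).symm
  have hav : a ⊂ verts A :=
    (subset_verts ha).ssubset_of_not_subset fun h => hba ((subset_verts hb).trans h)
  exact hu a ha ▸ card_lt_card hav

lemma StrictlyKBalanced.not_ssubset {k : ℕ} {A B : Finset (Finset ℕ)}
    (hA : StrictlyKBalanced k A) (hB : StrictlyKBalanced k B) (hd : kdens k B = kdens k A) :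
    ¬ B ⊂ A := fun hBA =>
  (hA.2 B hBA (by have := hB.1; omega)).ne hd

section Excess

variable (k : ℕ) (ρ : ℚ)

def excess (G : Finset (Finset ℕ)) : ℚ :=
  ((G.card : ℚ) - 1) - ρ * (((verts G).card : ℚ) - k)

lemma excess_union (T B : Finset (Finset ℕ)) :
    excess k ρ (T ∪ B) = excess k ρ T + excess k ρ B
      - (((B ∩ T).card : ℚ) - 1 - ρ * (((verts B ∩ verts T).card : ℚ) - k)) := by
  have he : ((T ∪ B).card : ℚ) + (B ∩ T).card = T.card + B.card := by
    rw [inter_comm]; exact_mod_cast card_union_add_card_inter T B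
  have hv : ((verts T ∪ verts B).card : ℚ) + (verts B ∩ verts T).card
      = (verts T).card + (verts B).card := by
    rw [inter_comm]; exact_mod_cast card_union_add_card_inter _ _
  simp only [excess, verts_union]
  linear_combination he - ρ * hv

variable {k ρ} {A : Finset (Finset ℕ)}

lemma excess_eq_zero_of_kdens_eq (hv : k < (verts A).card) (hd : kdens k A = ρ) :
    excess k ρ A = 0 := by
  have hpos : ((verts A).card : ℚ) - k ≠ 0 := sub_ne_zero.mpr (by exact_mod_cast hv.ne')
  rw [← hd, excess, kdens, div_mul_cancel₀ _ hpos, sub_self]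

lemma excess_neg_of_kdens_lt (hv : k < (verts A).card) (hd : kdens k A < ρ) :
    excess k ρ A < 0 := by
  have hpos : (0 : ℚ) < (verts A).card - k := sub_pos.mpr (by exact_mod_cast hv)
  rw [kdens, div_lt_iff₀ hpos] at hd
  rw [excess]; linarith

lemma lt_kdens_of_excess_pos (hv : k < (verts A).card) (h : 0 < excess k ρ A) :
    ρ < kdens k A := by
  have hpos : (0 : ℚ) < (verts A).card - k := sub_pos.mpr (by exact_mod_cast hv)
  rw [kdens, lt_div_iff₀ hpos]
  rw [excess] at h; linarith

namespace StrictlyKBalanced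

lemma excess_eq_zero (hA : StrictlyKBalanced k A) (hu : ∀ e ∈ A, e.card = k) (hd : kdens k A = ρ) :
    excess k ρ A = 0 :=
  excess_eq_zero_of_kdens_eq (lt_card_verts hu (by have := hA.1; omega)) hd

lemma excess_neg (hA : StrictlyKBalanced k A) (hu : ∀ e ∈ A, e.card = k) (hd : kdens k A = ρ)
    {G : Finset (Finset ℕ)} (hG : G ⊂ A) (h2 : 2 ≤ G.card) : excess k ρ G < 0 :=
  excess_neg_of_kdens_lt (lt_card_verts (fun e he => hu e (hG.subset he)) h2) (hd ▸ hA.2 G hG h2)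

lemma density_pos (hA : StrictlyKBalanced k A) (hu : ∀ e ∈ A, e.card = k) (hd : kdens k A = ρ) :
    0 < ρ := by
  have h0 := hA.excess_eq_zero hu hd
  have hv : (k : ℚ) < (verts A).card := by
    exact_mod_cast lt_card_verts hu (by have := hA.1; omega)
  have h3 : (3 : ℚ) ≤ A.card := by exact_mod_cast hA.1
  rw [excess] at h0
  nlinarith

lemma overlap_lt (hA : StrictlyKBalanced k A) (hu : ∀ e ∈ A, e.card = k) (hd : kdens k A = ρ)
    {T : Finset (Finset ℕ)} (h2 : 2 ≤ (A ∩ T).card) (hns : ¬ A ⊆ T) :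
    ((A ∩ T).card : ℚ) - 1 < ρ * (((verts A ∩ verts T).card : ℚ) - k) := by
  set W := verts A ∩ verts T
  set G := ind A W
  have hsub : A ∩ T ⊆ G := inter_subset_ind_inter_verts A T
  have hG : ((A ∩ T).card : ℚ) - 1 < ρ * (((verts G).card : ℚ) - k) := by
    have hGA : G ⊆ A := filter_subset _ A
    rcases hGA.eq_or_ssubset with hGA | hGA
    · have hlt : (A ∩ T).card < A.card := card_lt_card <|
        inter_subset_left.ssubset_of_not_subset fun h => hns (h.trans inter_subset_right)
      have h0 := hA.excess_eq_zero hu hd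
      rw [excess] at h0
      rw [hGA]
      have : ((A ∩ T).card : ℚ) < A.card := by exact_mod_cast hlt
      linarith
    · have hneg := hA.excess_neg hu hd hGA (h2.trans (card_le_card hsub))
      have : ((A ∩ T).card : ℚ) ≤ G.card := by exact_mod_cast card_le_card hsub
      rw [excess] at hneg
      linarith
  have hW : ((verts G).card : ℚ) ≤ W.card := by exact_mod_cast card_le_card (verts_ind_subset A W)
  calc ((A ∩ T).card : ℚ) - 1 < ρ * (((verts G).card : ℚ) - k) := hG
    _ ≤ ρ * ((W.card : ℚ) - k) :=
      mul_le_mul_of_nonneg_left (by linarith) (hA.density_pos hu hd).le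

lemma overlap_le (hA : StrictlyKBalanced k A) (hu : ∀ e ∈ A, e.card = k) (hd : kdens k A = ρ)
    {T : Finset (Finset ℕ)} (hD : (A ∩ T).Nonempty) :
    ((A ∩ T).card : ℚ) - 1 ≤ ρ * (((verts A ∩ verts T).card : ℚ) - k) := by
  by_cases hns : A ⊆ T
  · rw [inter_eq_left.mpr hns, inter_eq_left.mpr (verts_mono hns)]
    have h0 := hA.excess_eq_zero hu hd
    rw [excess] at h0
    linarith
  obtain h1 | h2 : (A ∩ T).card = 1 ∨ 2 ≤ (A ∩ T).card := by have := hD.card_pos; omega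
  · obtain ⟨d, hdAT⟩ := hD
    have hk : k ≤ (verts A ∩ verts T).card :=
      hu d (mem_inter.mp hdAT).1 ▸
        card_le_card (mem_filter.mp (inter_subset_ind_inter_verts A T hdAT)).2
    have : (0 : ℚ) ≤ ρ * (((verts A ∩ verts T).card : ℚ) - k) :=
      mul_nonneg (hA.density_pos hu hd).le (sub_nonneg.mpr (by exact_mod_cast hk))
    rw [h1]; push_cast; linarith
  · exact (hA.overlap_lt hu hd h2 hns).le

lemma excess_union_nonneg (hA : StrictlyKBalanced k A) (hu : ∀ e ∈ A, e.card = k)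
    (hd : kdens k A = ρ) {T : Finset (Finset ℕ)} (hT : 0 ≤ excess k ρ T)
    (hD : (A ∩ T).Nonempty) : 0 ≤ excess k ρ (T ∪ A) := by
  rw [excess_union, hA.excess_eq_zero hu hd]
  linarith [hA.overlap_le hu hd hD]

lemma excess_union_pos (hA : StrictlyKBalanced k A) (hu : ∀ e ∈ A, e.card = k) (hd : kdens k A = ρ)
    {T : Finset (Finset ℕ)} (hT : 0 ≤ excess k ρ T)
    (h2 : 2 ≤ (A ∩ T).card) (hns : ¬ A ⊆ T) : 0 < excess k ρ (T ∪ A) := by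
  rw [excess_union, hA.excess_eq_zero hu hd]
  linarith [hA.overlap_lt hu hd h2 hns]

end StrictlyKBalanced

lemma biUnion_range_succ (A : ℕ → Finset (Finset ℕ)) (j : ℕ) :
    (range (j + 1)).biUnion A = (range j).biUnion A ∪ A j := by
  rw [range_add_one, biUnion_insert, union_comm]

lemma excess_biUnion_range_nonneg {A : ℕ → Finset (Finset ℕ)} (m : ℕ)
    (hu : ∀ i ≤ m, ∀ e ∈ A i, e.card = k) (hA : ∀ i ≤ m, StrictlyKBalanced k (A i))
    (hd : ∀ i ≤ m, kdens k (A i) = ρ) (hchain : ∀ i < m, (A i ∩ A (i + 1)).Nonempty) :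
    0 ≤ excess k ρ ((range (m + 1)).biUnion A) := by
  induction m with
  | zero =>
    simp [(hA 0 le_rfl).excess_eq_zero (hu 0 le_rfl) (hd 0 le_rfl)]
  | succ m ih =>
    rw [biUnion_range_succ]
    have hT := ih (fun i hi => hu i (by omega)) (fun i hi => hA i (by omega))
      (fun i hi => hd i (by omega)) (fun i hi => hchain i (by omega))
    obtain ⟨e, he⟩ := hchain m (by omega)
    refine (hA _ le_rfl).excess_union_nonneg (hu _ le_rfl) (hd _ le_rfl) hT ⟨e, ?_⟩
    exact mem_inter.mpr ⟨(mem_inter.mp he).2,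
      mem_biUnion.mpr ⟨m, self_mem_range_succ m, (mem_inter.mp he).1⟩⟩

end Excess

lemma isSACW_iff {m : ℕ} {B : ℕ → Finset (Finset ℕ)} :
    IsSACW m B ↔ 2 ≤ m ∧ (∀ i < m, ∀ j < m, B i = B j → i = j) ∧
      ∃ c : ℕ → Finset ℕ, (∀ i < m, ∀ j < m, c i = c j → i = j) ∧
        (∀ i, i + 1 < m → c i ∈ B i ∧ c i ∈ B (i + 1)) ∧
        c (m - 1) ∈ B (m - 1) ∧ c (m - 1) ∈ B 0 := by
  constructor
  · rintro ⟨hm, hB, c, hc, hcB⟩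
    refine ⟨hm, hB, c, hc, fun i hi => ?_, ?_⟩
    · simpa only [Nat.mod_eq_of_lt hi] using hcB i (by omega)
    · simpa only [Nat.sub_add_cancel (by omega : 1 ≤ m), Nat.mod_self] using hcB (m - 1) (by omega)
  · rintro ⟨hm, hB, c, hc, hpath, hclose⟩
    refine ⟨hm, hB, c, hc, fun i hi => ?_⟩
    rcases (by omega : i + 1 < m ∨ i = m - 1) with h | rfl
    · rw [Nat.mod_eq_of_lt h]; exact hpath i h
    · rwa [Nat.sub_add_cancel (by omega), Nat.mod_self]

lemma isSACW_segment {A : ℕ → Finset (Finset ℕ)} {e : ℕ → Finset ℕ} {a b : ℕ} {f : Finset ℕ}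
    (hab : a < b) (hA : ∀ i ≤ b, ∀ j ≤ b, A i = A j → i = j)
    (he : ∀ i < b, ∀ j < b, e i = e j → i = j)
    (hpath : ∀ i < b, e i ∈ A i ∧ e i ∈ A (i + 1))
    (hf : f ∈ A b ∧ f ∈ A a) (hfe : ∀ i, a ≤ i → i < b → f ≠ e i) :
    IsSACW (b - a + 1) (fun i => A (a + i)) := by
  rw [isSACW_iff]
  refine ⟨by omega, fun i hi j hj h => ?_, fun i => if i = b - a then f else e (a + i), ?_, ?_, ?_⟩
  · have := hA _ (by omega) _ (by omega) h; omega
  · intro i hi j hj h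
    dsimp only at h
    split_ifs at h with hi' hj'
    · omega
    · exact absurd h (hfe _ (by omega) (by omega))
    · exact absurd h.symm (hfe _ (by omega) (by omega))
    · have := he _ (by omega) _ (by omega) h; omega
  · intro i hi
    simp only [if_neg (by omega : i ≠ b - a), ← add_assoc]
    exact hpath _ (by omega)
  · simp only [Nat.add_sub_cancel, if_pos, Nat.add_sub_cancel' hab.le, add_zero]
    exact hf

lemma isSACW_pair {A : ℕ → Finset (Finset ℕ)} {a b : ℕ} {f f' : Finset ℕ} (hab : A a ≠ A b)
    (hff' : f ≠ f') (hf : f ∈ A a ∧ f ∈ A b) (hf' : f' ∈ A b ∧ f' ∈ A a) :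
    IsSACW 2 (fun i => A (if i = 0 then a else b)) := by
  rw [isSACW_iff]
  refine ⟨le_rfl, fun i hi j hj h => ?_, fun i => if i = 0 then f else f', fun i hi j hj h => ?_,
    fun i hi => ?_, by simpa using hf'⟩
  · interval_cases i <;> interval_cases j <;> simp_all
  · interval_cases i <;> interval_cases j <;> simp_all
  · obtain rfl : i = 0 := by omega
    simpa using hf

lemma two_le_card_inter_biUnion_range {n : ℕ} {A : ℕ → Finset (Finset ℕ)} {e : ℕ → Finset ℕ}
    (hn : 2 ≤ n) (he : ∀ i < n, ∀ j < n, e i = e j → i = j)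
    (hpath : ∀ i, i + 1 < n → e i ∈ A i ∧ e i ∈ A (i + 1))
    (hclose : e (n - 1) ∈ A (n - 1) ∧ e (n - 1) ∈ A 0) :
    2 ≤ (A (n - 1) ∩ (range (n - 1)).biUnion A).card := by
  have hmem : ∀ i < n - 1, ∀ x ∈ A i, x ∈ (range (n - 1)).biUnion A := fun i hi x hx =>
    mem_biUnion.mpr ⟨i, mem_range.mpr hi, hx⟩
  have hlast : e (n - 2) ∈ A (n - 1) := by
    simpa [show n - 2 + 1 = n - 1 by omega] using (hpath (n - 2) (by omega)).2
  exact one_lt_card.mpr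
    ⟨e (n - 2), mem_inter.mpr ⟨hlast, hmem _ (by omega) _ (hpath (n - 2) (by omega)).1⟩,
      e (n - 1), mem_inter.mpr ⟨hclose.1, hmem 0 (by omega) _ hclose.2⟩,
      fun h => by have := he _ (by omega) _ (by omega) h; omega⟩

lemma not_subset_biUnion_of_minimal {n : ℕ} {A : ℕ → Finset (Finset ℕ)} {e : ℕ → Finset ℕ}
    (hn : 3 ≤ n) (hA : ∀ i < n, ∀ j < n, A i = A j → i = j)
    (he : ∀ i < n, ∀ j < n, e i = e j → i = j)
    (hpath : ∀ i, i + 1 < n → e i ∈ A i ∧ e i ∈ A (i + 1))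
    (hclose : e (n - 1) ∈ A (n - 1) ∧ e (n - 1) ∈ A 0)
    (hmin : ∀ (m : ℕ) (g : ℕ → ℕ), m < n → (∀ i < m, g i < n) →
      (∀ i j, i < j → j < m → g i < g j) → ¬ IsSACW m (fun i => A (g i)))
    (hcard : 3 ≤ (A (n - 1)).card) :
    ¬ A (n - 1) ⊆ (range (n - 1)).biUnion A := by
  intro hsub
  obtain ⟨f, hfA, hf⟩ := exists_mem_notMem_of_card_lt_card
    (s := {e (n - 2), e (n - 1)}) (card_le_two.trans_lt hcard)
  simp only [mem_insert, mem_singleton, not_or] at hf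
  obtain ⟨a, ha, hfa, hfe⟩ : ∃ a ≤ n - 2, f ∈ A a ∧ ∀ i, a ≤ i → i < n - 1 → f ≠ e i := by
    by_cases hfe : ∃ m < n, f = e m
    · obtain ⟨m, hm, rfl⟩ := hfe
      have hm2 : m ≠ n - 2 := by rintro rfl; exact hf.1 rfl
      have hm1 : m ≠ n - 1 := by rintro rfl; exact hf.2 rfl
      exact ⟨m + 1, by omega, (hpath m (by omega)).2,
        fun i hi _ h => by have := he m hm i (by omega) h; omega⟩
    · simp only [not_exists, not_and] at hfe
      obtain ⟨j, hj, hfj⟩ := mem_biUnion.mp (hsub hfA)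
      exact ⟨j, by rw [mem_range] at hj; omega, hfj, fun i _ hi => hfe i (by omega)⟩
  rcases Nat.eq_zero_or_pos a with rfl | ha0
  · refine hmin 2 (fun i => if i = 0 then 0 else n - 1) (by omega)
      (fun i _ => by split_ifs <;> omega) (fun i j hij hj => by split_ifs <;> omega) ?_
    exact isSACW_pair (fun h => by have := hA 0 (by omega) (n - 1) (by omega) h; omega)
      hf.2 ⟨hfa, hfA⟩ hclose
  · refine hmin (n - 1 - a + 1) (fun i => a + i) (by omega) (fun i hi => by omega)
      (fun i j hij _ => by omega) ?_
    exact isSACW_segment (by omega) (fun i hi j hj => hA i (by omega) j (by omega))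
      (fun i hi j hj => he i (by omega) j (by omega)) (fun i hi => hpath i (by omega))
      ⟨hfA, hfa⟩ hfe

theorem minimal_cyclic_walk_dense_general
    (k : ℕ) (ρ : ℚ) (n : ℕ)
    (A : ℕ → Finset (Finset ℕ))
    (hunif : ∀ i < n, ∀ e ∈ A i, e.card = k)
    (hsb : ∀ i < n, StrictlyKBalanced k (A i))
    (hd : ∀ i < n, kdens k (A i) = ρ)
    (hwalk : IsSACW n A)
    (hmin : ∀ (m : ℕ) (g : ℕ → ℕ), m < n → (∀ i < m, g i < n) →
      (∀ i j, i < j → j < m → g i < g j) → ¬ IsSACW m (fun i => A (g i)))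
    (S : Finset (Finset ℕ)) (hS : S = (Finset.range n).biUnion A) :
    ∃ e ∈ S, ρ < ((S.card : ℚ) - 1) / (((verts S).card : ℚ) - (k : ℚ)) := by
  obtain ⟨hn, hAinj, e, heinj, hpath, hclose⟩ := isSACW_iff.mp hwalk
  set T := (range (n - 1)).biUnion A
  have hST : S = T ∪ A (n - 1) := by
    rw [hS, ← biUnion_range_succ, Nat.sub_add_cancel (by omega)]
  have hT : 0 ≤ excess k ρ T := by
    have := excess_biUnion_range_nonneg (n - 2) (fun i _ => hunif i (by omega))
      (fun i _ => hsb i (by omega)) (fun i _ => hd i (by omega))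
      (fun i _ => ⟨e i, mem_inter.mpr (hpath i (by omega))⟩)
    rwa [show n - 2 + 1 = n - 1 by omega] at this
  have hoverlap := two_le_card_inter_biUnion_range hn heinj hpath hclose
  have hnsub : ¬ A (n - 1) ⊆ T := by
    rcases (by omega : n = 2 ∨ 3 ≤ n) with rfl | hn3
    · refine fun hsub => (hsb 0 (by omega)).not_ssubset (hsb 1 (by omega))
        ((hd 1 (by omega)).trans (hd 0 (by omega)).symm) ?_
      refine (by simpa [T] using hsub : A 1 ⊆ A 0).ssubset_of_ne fun h => ?_
      have := hAinj 1 (by omega) 0 (by omega) h; omega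
    · exact not_subset_biUnion_of_minimal hn3 hAinj heinj hpath hclose hmin
        (hsb _ (by omega)).1
  have hpos := (hsb _ (by omega)).excess_union_pos (hunif _ (by omega)) (hd _ (by omega))
    hT hoverlap hnsub
  have hv : k < (verts (T ∪ A (n - 1))).card :=
    (lt_card_verts (hunif _ (by omega)) (by have := (hsb (n - 1) (by omega)).1; omega)).trans_le
      (card_le_card (verts_mono subset_union_right))
  subst hST
  exact ⟨e (n - 1), mem_union_right _ hclose.1, lt_kdens_of_excess_pos hv hpos⟩

/-- if distinct strictly `k`-balanced `k`-graphs `A 0, …, A (n-1)`, all of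
`k`-density `ρ`, form a self-avoiding cyclic walk none of whose proper subsequences forms a
self-avoiding cyclic walk, then their union `S` has an edge `e` with `ρ_{S,e} > ρ`. -/
theorem minimal_cyclic_walk_dense
    (k : ℕ) (hk : 2 ≤ k) (ρ : ℚ) (n : ℕ)
    (A : ℕ → Finset (Finset ℕ))
    (hunif : ∀ i < n, ∀ e ∈ A i, e.card = k)
    (hsb : ∀ i < n, StrictlyKBalanced k (A i))
    (hd : ∀ i < n, kdens k (A i) = ρ)
    (hwalk : IsSACW n A)
    (hmin : ∀ (m : ℕ) (g : ℕ → ℕ), m < n → (∀ i < m, g i < n) →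
      (∀ i j, i < j → j < m → g i < g j) → ¬ IsSACW m (fun i => A (g i)))
    (S : Finset (Finset ℕ)) (hS : S = (Finset.range n).biUnion A) :
    ∃ e ∈ S, ρ < ((S.card : ℚ) - 1) / (((verts S).card : ℚ) - (k : ℚ)) :=
  minimal_cyclic_walk_dense_general k ρ n A hunif hsb hd hwalk hmin S hS
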